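/- For b(x) = (1−x²)x and σ(x) = (1+x²)/2 on ℝ, and any p* with 2 ≤ p* < 3.5, the coupled monotonicity condition 2(x−y)(b(x)−b(y)) + (2p*−1)(σ(x)−σ(y))² ≤ 2(x−y)² holds for all x, y ∈ ℝ. -/
import Mathlib

theorem stmt_7 (b σ : ℝ → ℝ)
    (hb : ∀ x, b x = (1 - x ^ 2) * x) (hσ : ∀ x, σ x = (1 + x ^ 2) / 2)
    (p : ℝ) (hp2 : 2 ≤ p) (hp : p < 3.5) :
    ∀ x y : ℝ, 2 * (x - y) * (b x - b y) + (2 * p - 1) * (σ x - σ y) ^ 2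
      ≤ 2 * (x - y) ^ 2 := by
  intro x y
  rw [hb, hb, hσ, hσ]
  nlinarith [sq_nonneg (x - y), sq_nonneg (x + y), sq_nonneg ((x - y) * (x + y)),
    mul_nonneg (mul_nonneg (le_of_lt (by linarith : (0:ℝ) < 3.5 - p)) (sq_nonneg (x - y))) (sq_nonneg (x + y)),
    sq_nonneg (x^2 - y^2)]
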